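/- For C = 1/√30, the set of points x ∈ A_C at which the gradients ∇p₁(x), ∇p₂(x), ∇p₃(x) are linearly dependent consists of exactly 10 points, namely the coordinate permutations of (−2/√30, −2/√30, −2/√30, 3/√30, 3/√30); analogously for C = −1/√30 the 10 singular points are the permutations of (2/√30, 2/√30, 2/√30, −3/√30, −3/√30). -/

import Mathlib

noncomputable section

/-- Power sum `p_k(x) = x₁^k + ⋯ + x₅^k` on `ℝ⁵`. -/
def p (k : ℕ) (x : Fin 5 → ℝ) : ℝ := ∑ i, x i ^ k

/-- The surface `A_C = {x ∈ ℝ⁵ : p₁(x) = 0, p₂(x) = 1, p₃(x) = C}`. -/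
def A (C : ℝ) : Set (Fin 5 → ℝ) := {x | p 1 x = 0 ∧ p 2 x = 1 ∧ p 3 x = C}

/-- The gradient of `p_k`: `∇p_k(x) = (k x₁^{k-1}, …, k x₅^{k-1})`. -/
def grad (k : ℕ) (x : Fin 5 → ℝ) : Fin 5 → ℝ := fun i => (k : ℝ) * x i ^ (k - 1)

/-- The set of coordinate permutations of a point `x₀ ∈ ℝ⁵`. -/
def perms (x₀ : Fin 5 → ℝ) : Set (Fin 5 → ℝ) := {x | ∃ σ : Equiv.Perm (Fin 5), x = x₀ ∘ σ}

/-!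
If the gradients are dependent, some nonzero quadratic `c₀ + c₁ t + c₂ t²` vanishes at every
coordinate `xᵢ`. Summing it, and `xᵢ` times it, over `i` and using `p₁ = 0`, `p₂ = 1`,
`p₃ = C` shows that it is a multiple of `t² - C t - 1/5`; conversely this quadratic gives a
dependence. For `C = a + b` with `3a + 2b = 0`, `3a² + 2b² = 1` its roots are `a` and `b`, so
every coordinate is `a` or `b`, and `p₁ = 0` forces exactly two of them to be `b`: the singular
points are the `choose 5 2 = 10` arrangements of `(a, a, a, b, b)`.
-/

open Finset
open scoped Pointwise

section TwoValued

variable {ι : Type*} [DecidableEq ι] (a b : ℝ)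

def twoValued (s : Finset ι) : ι → ℝ := fun i => if i ∈ s then b else a

variable {a b}

theorem twoValued_injective (hab : a ≠ b) : Function.Injective (twoValued (ι := ι) a b) := by
  intro s t hst
  ext i
  have := congrFun hst i
  by_cases hs : i ∈ s <;> by_cases ht : i ∈ t <;> simp_all [twoValued, eq_comm]

theorem ncard_image_twoValued (hab : a ≠ b) (n : ℕ) :
    (twoValued a b '' Set.powersetCard ι n).ncard = (Nat.card ι).choose n := by
  rw [Set.ncard_image_of_injective _ (twoValued_injective hab), ← Nat.card_coe_set_eq,
    Set.powersetCard.card]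

theorem twoValued_comp_perm (s : Finset ι) (σ : Equiv.Perm ι) :
    twoValued a b s ∘ σ = twoValued a b (σ⁻¹ • s) := by
  funext i
  simp [twoValued, Finset.mem_inv_smul_finset_iff, Equiv.Perm.smul_def]

theorem sum_twoValued_pow [Fintype ι] (s : Finset ι) (k : ℕ) :
    ∑ i, twoValued a b s i ^ k = Fintype.card ι * a ^ k + #s * (b ^ k - a ^ k) := by
  have hsplit : ∀ i, twoValued a b s i ^ k = a ^ k + if i ∈ s then b ^ k - a ^ k else 0 := by
    intro i
    unfold twoValued
    split_ifs <;> ring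
  simp [hsplit, Finset.sum_add_distrib, Finset.sum_ite_mem, mul_sub]

theorem twoValued_filter_eq [Fintype ι] {x : ι → ℝ} (hx : ∀ i, x i = a ∨ x i = b) :
    twoValued a b {i | x i = b} = x := by
  funext i
  rcases hx i with h | h <;> simp [twoValued, h, eq_comm]

end TwoValued

theorem perms_twoValued (a b : ℝ) (s : Finset (Fin 5)) :
    perms (twoValued a b s) = twoValued a b '' Set.powersetCard (Fin 5) #s := by
  ext x
  constructor
  · rintro ⟨σ, rfl⟩
    exact ⟨σ⁻¹ • s, Finset.card_smul_finset _ _, (twoValued_comp_perm s σ).symm⟩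
  · rintro ⟨t, ht, rfl⟩
    obtain ⟨σ, hσ⟩ := (Set.powersetCard.isPretransitive (α := Fin 5) (n := #s)).exists_smul_eq
      ⟨t, ht⟩ ⟨s, rfl⟩
    have hσt : σ • t = s := congrArg Subtype.val hσ
    exact ⟨σ, by rw [twoValued_comp_perm, ← hσt, inv_smul_smul]⟩

theorem quadratic_relation_coeffs {ι : Type*} [Fintype ι] {x : ι → ℝ} {c₀ c₁ c₂ : ℝ}
    (hq : ∀ i, c₀ + c₁ * x i + c₂ * x i ^ 2 = 0) (h1 : ∑ i, x i = 0) (h2 : ∑ i, x i ^ 2 = 1) :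
    Fintype.card ι * c₀ + c₂ = 0 ∧ c₁ + c₂ * ∑ i, x i ^ 3 = 0 := by
  have hsum : ∑ i, (c₀ + c₁ * x i + c₂ * x i ^ 2) = 0 :=
    Finset.sum_eq_zero fun i _ => hq i
  have hmoment : ∑ i, (c₀ * x i + c₁ * x i ^ 2 + c₂ * x i ^ 3) = 0 :=
    Finset.sum_eq_zero fun i _ => by linear_combination x i * hq i
  simp only [Finset.sum_add_distrib, ← Finset.mul_sum, Finset.sum_const, Finset.card_univ,
    nsmul_eq_mul, h1, h2] at hsum hmoment
  constructor <;> linarith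

theorem sum_smul_grad_apply (g : Fin 3 → ℝ) (x : Fin 5 → ℝ) (j : Fin 5) :
    (∑ i, g i • ![grad 1 x, grad 2 x, grad 3 x] i) j =
      g 0 + 2 * g 1 * x j + 3 * g 2 * x j ^ 2 := by
  simp only [Finset.sum_apply, Fin.sum_univ_three, Pi.smul_apply, smul_eq_mul, Matrix.cons_val,
    grad]
  norm_num
  ring

theorem not_linearIndependent_grad_iff {C : ℝ} {x : Fin 5 → ℝ} (hx : x ∈ A C) :
    ¬ LinearIndependent ℝ ![grad 1 x, grad 2 x, grad 3 x] ↔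
      ∀ i, x i ^ 2 - C * x i - 1 / 5 = 0 := by
  rw [Fintype.not_linearIndependent_iff]
  constructor
  · rintro ⟨g, hg, i₀, hi₀⟩
    have hq : ∀ j, g 0 + 2 * g 1 * x j + 3 * g 2 * x j ^ 2 = 0 := fun j => by
      rw [← sum_smul_grad_apply, hg, Pi.zero_apply]
    obtain ⟨hx1, hx2, hx3⟩ := hx
    obtain ⟨h0, h1⟩ := quadratic_relation_coeffs hq (by simpa [p] using hx1) hx2
    simp only [Fintype.card_fin, Nat.cast_ofNat] at h0 h1
    rw [show ∑ i, x i ^ 3 = C from hx3] at h1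
    have hg2 : g 2 ≠ 0 := by
      intro hg2
      have hg0 : g 0 = 0 := by linarith
      have hg1 : g 1 = 0 := by rw [hg2] at h1; linarith
      fin_cases i₀ <;> simp_all
    intro j
    have hfactor : 3 * g 2 * (x j ^ 2 - C * x j - 1 / 5) = 0 := by
      linear_combination hq j - h0 / 5 - x j * h1
    exact (mul_eq_zero.mp hfactor).resolve_left (mul_ne_zero three_ne_zero hg2)
  · intro h
    refine ⟨![-1 / 5, -C / 2, 1 / 3], funext fun j => ?_, 2, by simp⟩
    rw [sum_smul_grad_apply]
    simp only [Matrix.cons_val, Pi.zero_apply]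
    linear_combination h j

def singularLocus (C : ℝ) : Set (Fin 5 → ℝ) :=
  {x ∈ A C | ¬ LinearIndependent ℝ ![grad 1 x, grad 2 x, grad 3 x]}

section Moments

variable {a b : ℝ} (h1 : 3 * a + 2 * b = 0) (h2 : 3 * a ^ 2 + 2 * b ^ 2 = 1)
include h1 h2

theorem ne_of_moments : a ≠ b := by
  rintro rfl
  nlinarith

theorem mul_eq_of_moments : a * b = -1 / 5 := by
  linear_combination (a + b) / 5 * h1 - 1 / 5 * h2

theorem singularLocus_eq_image {C : ℝ} (hC : a + b = C) :
    singularLocus C = twoValued a b '' Set.powersetCard (Fin 5) 2 := by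
  have hprod := mul_eq_of_moments h1 h2
  ext x
  constructor
  · rintro ⟨hx, hdep⟩
    have hroots : ∀ i, x i = a ∨ x i = b := fun i => by
      have hq := (not_linearIndependent_grad_iff hx).mp hdep i
      have hfactor : (x i - a) * (x i - b) = 0 := by linear_combination hq - x i * hC + hprod
      simpa [sub_eq_zero] using hfactor
    set T : Finset (Fin 5) := {i | x i = b}
    have hsum := sum_twoValued_pow (a := a) (b := b) T 1
    rw [twoValued_filter_eq hroots] at hsum
    have hcard : ((#T : ℕ) - 2 : ℝ) * (b - a) = 0 := by
      have hx1 : ∑ i, x i ^ 1 = 0 := hx.1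
      simp only [Fintype.card_fin, Nat.cast_ofNat, pow_one] at hsum hx1
      linear_combination hsum.symm.trans hx1 - h1
    have hba : b - a ≠ 0 := sub_ne_zero.mpr (ne_of_moments h1 h2).symm
    refine ⟨T, ?_, twoValued_filter_eq hroots⟩
    rw [Set.powersetCard.mem_iff]
    exact_mod_cast sub_eq_zero.mp ((mul_eq_zero.mp hcard).resolve_right hba)
  · rintro ⟨T, hT, rfl⟩
    have hp : ∀ k, p k (twoValued a b T) = 3 * a ^ k + 2 * b ^ k := fun k => by
      rw [p, sum_twoValued_pow, Set.powersetCard.mem_iff.mp hT]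
      simp only [Fintype.card_fin]
      push_cast
      ring
    have hmem : twoValued a b T ∈ A C := by
      refine ⟨?_, ?_, ?_⟩ <;> rw [hp]
      · linear_combination h1
      · linear_combination h2
      · linear_combination (-a * b) * h1 + (a + b) * h2 + hC
    refine ⟨hmem, (not_linearIndependent_grad_iff hmem).mpr fun i => ?_⟩
    unfold twoValued
    split_ifs
    · linear_combination b * hC - hprod
    · linear_combination a * hC - hprod

theorem singularLocus_eq_perms {C : ℝ} (hC : a + b = C) :
    singularLocus C = perms ![a, a, a, b, b] ∧ (singularLocus C).ncard = 10 := by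
  have hvec : ![a, a, a, b, b] = twoValued a b {3, 4} := by
    funext i
    fin_cases i <;> simp [twoValued]
  rw [singularLocus_eq_image h1 h2 hC, hvec, perms_twoValued]
  rw [ncard_image_twoValued (ne_of_moments h1 h2), Nat.card_eq_fintype_card, Fintype.card_fin]
  exact ⟨rfl, rfl⟩

end Moments

/-- for `C = 1/√30`, the singular points of `A_C` (where the three gradients are
linearly dependent) are exactly the 10 coordinate permutations of
`(-2/√30, -2/√30, -2/√30, 3/√30, 3/√30)`; for `C = -1/√30`, the 10 permutations of
`(2/√30, 2/√30, 2/√30, -3/√30, -3/√30)`. -/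
theorem stmt_7 :
    ({x ∈ A (1 / Real.sqrt 30) | ¬ LinearIndependent ℝ ![grad 1 x, grad 2 x, grad 3 x]} =
        perms ![-(2 / Real.sqrt 30), -(2 / Real.sqrt 30), -(2 / Real.sqrt 30), 3 / Real.sqrt 30,
          3 / Real.sqrt 30] ∧
      {x ∈ A (1 / Real.sqrt 30) |
        ¬ LinearIndependent ℝ ![grad 1 x, grad 2 x, grad 3 x]}.ncard = 10) ∧
    ({x ∈ A (-(1 / Real.sqrt 30)) | ¬ LinearIndependent ℝ ![grad 1 x, grad 2 x, grad 3 x]} =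
        perms ![2 / Real.sqrt 30, 2 / Real.sqrt 30, 2 / Real.sqrt 30, -(3 / Real.sqrt 30),
          -(3 / Real.sqrt 30)] ∧
      {x ∈ A (-(1 / Real.sqrt 30)) |
        ¬ LinearIndependent ℝ ![grad 1 x, grad 2 x, grad 3 x]}.ncard = 10) := by
  have hsqrt : Real.sqrt 30 ^ 2 = 30 := Real.sq_sqrt (by norm_num)
  have h2 : 3 * (2 / Real.sqrt 30) ^ 2 + 2 * (3 / Real.sqrt 30) ^ 2 = 1 := by
    rw [div_pow, div_pow, hsqrt]
    norm_num
  constructor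
  · exact singularLocus_eq_perms (by ring) (by linear_combination h2) (by ring)
  · exact singularLocus_eq_perms (by ring) (by linear_combination h2) (by ring)
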